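/- arXiv:2107.00647 — 3 statements merged into one kernel-verified Lean document; each statement's English description precedes it below -/
import Mathlib

section
/- Let H and K be subgroups of a finite group G, with characters χ_H of a representation of H and χ_K of a representation of K. Then Ind_H^G χ_H = Ind_K^G χ_K if and only if for every g ∈ H ∪ K, (1/|H|) Σ_{h ∈ H ∩ [g]_G} χ_H(h) = (1/|K|) Σ_{k ∈ K ∩ [g]_G} χ_K(k), where [g]_G is the conjugacy class of g in G. -/
open Classical in
/-- The character of `G` induced from the character `χ` of the subgroup `H`, via the
coset-representative formula `(χ ↑ G)(g) = Σ_{cosets x} χ̃(x.out⁻¹ * g * x.out)`,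
where `χ̃` extends `χ` by zero off `H`. -/
noncomputable def indChar {G : Type*} [Group G] [Fintype G] (H : Subgroup G)
    (χ : ↥H → ℂ) : G → ℂ :=
  fun g => ∑ᶠ x : G ⧸ H,
    if h : (Quotient.out x)⁻¹ * g * Quotient.out x ∈ H
      then χ ⟨(Quotient.out x)⁻¹ * g * Quotient.out x, h⟩ else 0

open Finset
section helpers
variable {G : Type*} [Group G] [Fintype G]

open Classical in
noncomputable def nfib {G : Type*} [Group G] [Fintype G] (g : G) : ℕ :=
  (univ.filter fun x : G => x⁻¹ * g * x = g).card

open Classical in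
lemma nfib_ne_zero (g : G) : (nfib g : ℂ) ≠ 0 := by
  have : 0 < nfib g := Finset.card_pos.2 ⟨1, by simp [nfib]⟩
  exact_mod_cast this.ne'

open Classical in
lemma card_fiber (g y : G) (h : IsConj g y) :
    (univ.filter fun x : G => x⁻¹ * g * x = y).card = nfib g := by
  obtain ⟨c, hc⟩ := isConj_iff.mp h
  subst hc
  apply Finset.card_nbij' (fun x => x * c) (fun x => x * c⁻¹)
  · intro a ha
    simp only [mem_coe, mem_filter, mem_univ, true_and] at ha ⊢
    rw [mul_inv_rev]
    calc c⁻¹ * a⁻¹ * g * (a * c) = c⁻¹ * (a⁻¹ * g * a) * c := by group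
    _ = c⁻¹ * (c * g * c⁻¹) * c := by rw [ha]
    _ = g := by group
  · intro a ha
    simp only [mem_coe, mem_filter, mem_univ, true_and] at ha ⊢
    rw [mul_inv_rev]
    calc c⁻¹⁻¹ * a⁻¹ * g * (a * c⁻¹) = c * (a⁻¹ * g * a) * c⁻¹ := by group
    _ = c * g * c⁻¹ := by rw [ha]
  · intro a _; simp
  · intro a _; simp

open Classical in
lemma image_conj (g : G) :
    (univ.image fun x : G => x⁻¹ * g * x) = univ.filter fun y => IsConj g y := by
  ext y
  simp only [mem_image, mem_filter, mem_univ, true_and]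
  constructor
  · rintro ⟨x, -, rfl⟩
    exact isConj_iff.mpr ⟨x⁻¹, by group⟩
  · intro hy
    obtain ⟨c, hc⟩ := isConj_iff.mp hy
    exact ⟨c⁻¹, by rw [← hc]; group⟩

open Classical in
lemma sum_conj_eq (g : G) (φ : G → ℂ) :
    ∑ x : G, φ (x⁻¹ * g * x) = (nfib g : ℂ) * ∑ y : G, if IsConj g y then φ y else 0 := by
  rw [Finset.sum_comp φ (fun x : G => x⁻¹ * g * x), image_conj]
  rw [← Finset.sum_filter, Finset.mul_sum]
  apply Finset.sum_congr rfl
  intro y hy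
  rw [mem_filter] at hy
  rw [card_fiber g y hy.2, nsmul_eq_mul]

open Classical in
noncomputable def cosetEquiv (H : Subgroup G) : (G ⧸ H) × ↥H ≃ G where
  toFun p := Quotient.out p.1 * p.2
  invFun x := ⟨QuotientGroup.mk x, ⟨(Quotient.out (QuotientGroup.mk x : G ⧸ H))⁻¹ * x, by
    rw [← QuotientGroup.eq, QuotientGroup.out_eq']⟩⟩
  left_inv := by
    rintro ⟨q, h⟩
    have hmk : (QuotientGroup.mk (Quotient.out q * (h : G)) : G ⧸ H) = q := by
      rw [QuotientGroup.mk_mul_of_mem _ h.2, QuotientGroup.out_eq']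
    refine Prod.ext ?_ ?_
    · exact hmk
    · ext
      simp only [hmk]
      group
  right_inv := by
    intro x
    simp only []
    group

open Classical in
lemma sum_over_group (H : Subgroup G) [Fintype ↥H] (f : G → ℂ) :
    ∑ x : G, f x = ∑ q : G ⧸ H, ∑ h : ↥H, f (Quotient.out q * h) := by
  rw [← Equiv.sum_comp (cosetEquiv H) f, Fintype.sum_prod_type]
  rfl

open Classical in
lemma indChar_eq (H : Subgroup G) [Fintype ↥H] (χ : ↥H → ℂ)
    (hχ : ∀ (a b : ↥H), χ (a * b * a⁻¹) = χ b) (g : G) :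
    indChar H χ g = (Fintype.card ↥H : ℂ)⁻¹ * ((nfib g : ℂ) *
      ∑ h : ↥H, if IsConj g (h : G) then χ h else 0) := by
  classical
  set φ : G → ℂ := fun y => if hy : y ∈ H then χ ⟨y, hy⟩ else 0 with hφ
  have hφconj : ∀ (h : ↥H) (y : G), φ ((h : G)⁻¹ * y * h) = φ y := by
    intro h y
    by_cases hy : y ∈ H
    · have hy' : (h : G)⁻¹ * y * h ∈ H := H.mul_mem (H.mul_mem (H.inv_mem h.2) hy) h.2
      simp only [hφ, dif_pos hy, dif_pos hy']
      have : (⟨(h : G)⁻¹ * y * h, hy'⟩ : ↥H) = h⁻¹ * ⟨y, hy⟩ * h⁻¹⁻¹ := by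
        ext; simp
      rw [this, hχ h⁻¹ ⟨y, hy⟩]
    · have hy' : (h : G)⁻¹ * y * h ∉ H := by
        intro hc
        apply hy
        have := H.mul_mem (H.mul_mem h.2 hc) (H.inv_mem h.2)
        convert this using 1
        group
      simp only [hφ, dif_neg hy, dif_neg hy']
  -- step 1: indChar as finite sum
  have h1 : indChar H χ g = ∑ q : G ⧸ H, φ ((Quotient.out q)⁻¹ * g * Quotient.out q) := by
    rw [indChar]
    exact finsum_eq_sum_of_fintype _
  -- step 2: |H| * that sum = full sum over G
  have h2 : ∑ x : G, φ (x⁻¹ * g * x)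
      = (Fintype.card ↥H : ℂ) * ∑ q : G ⧸ H, φ ((Quotient.out q)⁻¹ * g * Quotient.out q) := by
    rw [sum_over_group H (fun x => φ (x⁻¹ * g * x))]
    rw [Finset.mul_sum]
    apply Finset.sum_congr rfl
    intro q _
    have : ∀ h : ↥H, φ ((Quotient.out q * (h : G))⁻¹ * g * (Quotient.out q * h))
        = φ ((Quotient.out q)⁻¹ * g * Quotient.out q) := by
      intro h
      rw [← hφconj h ((Quotient.out q)⁻¹ * g * Quotient.out q)]
      congr 1
      group
    rw [Finset.sum_congr rfl (fun h _ => this h), Finset.sum_const, card_univ, nsmul_eq_mul]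
  -- step 3: full sum via conjugacy classes
  have h3 : ∑ x : G, φ (x⁻¹ * g * x)
      = (nfib g : ℂ) * ∑ h : ↥H, if IsConj g (h : G) then χ h else 0 := by
    rw [sum_conj_eq g φ]
    congr 1
    have hz : ∀ y ∈ (univ : Finset G), (if IsConj g y then φ y else 0) ≠ 0 → y ∈ H := by
      intro y _ hne
      by_contra hy
      simp [hφ, dif_neg hy] at hne
    have himg : (univ : Finset ↥H).image (Subtype.val) = univ.filter (fun y : G => y ∈ H) := by
      ext y
      simp only [mem_image, mem_filter, mem_univ, true_and]
      constructor
      · rintro ⟨h, rfl⟩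
        · exact h.2
      · intro hy
        exact ⟨⟨y, hy⟩, rfl⟩
    rw [← Finset.sum_filter_of_ne hz, ← himg,
      Finset.sum_image (fun x _ y _ hxy => Subtype.ext hxy)]
    apply Finset.sum_congr rfl
    intro h _
    by_cases hc : IsConj g (h : G)
    · simp only [if_pos hc, hφ, dif_pos h.2, Subtype.coe_eta]
    · simp only [if_neg hc]
  have hcard : (Fintype.card ↥H : ℂ) ≠ 0 := by
    exact_mod_cast Fintype.card_ne_zero
  rw [h1, eq_inv_mul_iff_mul_eq₀ hcard]
  exact h2.symm.trans h3

end helpers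

open FDRep Classical in
/-- Induced characters from two subgroups `H, K` of a finite group `G` agree if and only if
for every `g ∈ H ∪ K`, `(1/|H|) Σ_{h ∈ H ∩ [g]_G} χ_H(h) = (1/|K|) Σ_{k ∈ K ∩ [g]_G} χ_K(k)`. -/
theorem stmt_5 {G : Type} [Group G] [Fintype G] (H K : Subgroup G)
    [Fintype ↥H] [Fintype ↥K] (V : FDRep ℂ ↥H) (W : FDRep ℂ ↥K) :
    indChar H V.character = indChar K W.character ↔
      ∀ g ∈ (H : Set G) ∪ (K : Set G),
        (Fintype.card ↥H : ℂ)⁻¹ *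
            ∑ h : ↥H, (if IsConj g (h : G) then V.character h else 0) =
          (Fintype.card ↥K : ℂ)⁻¹ *
            ∑ k : ↥K, (if IsConj g (k : G) then W.character k else 0) := by
  have hV : ∀ (a b : ↥H), V.character (a * b * a⁻¹) = V.character b := fun a b => V.char_conj b a
  have hW : ∀ (a b : ↥K), W.character (a * b * a⁻¹) = W.character b := fun a b => W.char_conj b a
  constructor
  · intro hEq g _
    have h := congrFun hEq g
    rw [indChar_eq H V.character hV g, indChar_eq K W.character hW g] at h
    have hn := nfib_ne_zero g
    have h2 : (nfib g : ℂ) * ((Fintype.card ↥H : ℂ)⁻¹ *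
          ∑ h : ↥H, (if IsConj g (h : G) then V.character h else 0))
        = (nfib g : ℂ) * ((Fintype.card ↥K : ℂ)⁻¹ *
          ∑ k : ↥K, (if IsConj g (k : G) then W.character k else 0)) := by
      linear_combination h
    exact mul_left_cancel₀ hn h2
  · intro hcond
    funext g
    rw [indChar_eq H V.character hV g, indChar_eq K W.character hW g]
    suffices hs : (Fintype.card ↥H : ℂ)⁻¹ *
          ∑ h : ↥H, (if IsConj g (h : G) then V.character h else 0)
        = (Fintype.card ↥K : ℂ)⁻¹ *
          ∑ k : ↥K, (if IsConj g (k : G) then W.character k else 0) by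
      linear_combination (nfib g : ℂ) * hs
    by_cases hex : ∃ g' ∈ (H : Set G) ∪ (K : Set G), IsConj g g'
    · obtain ⟨g', hg', hconj⟩ := hex
      have e1 : ∑ h : ↥H, (if IsConj g (h : G) then V.character h else 0)
          = ∑ h : ↥H, (if IsConj g' (h : G) then V.character h else 0) := by
        apply Finset.sum_congr rfl
        intro h _
        by_cases hc : IsConj g' (h : G)
        · rw [if_pos hc, if_pos (hconj.trans hc)]
        · rw [if_neg hc, if_neg (fun hcc => hc (hconj.symm.trans hcc))]
      have e2 : ∑ k : ↥K, (if IsConj g (k : G) then W.character k else 0)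
          = ∑ k : ↥K, (if IsConj g' (k : G) then W.character k else 0) := by
        apply Finset.sum_congr rfl
        intro k _
        by_cases hc : IsConj g' (k : G)
        · rw [if_pos hc, if_pos (hconj.trans hc)]
        · rw [if_neg hc, if_neg (fun hcc => hc (hconj.symm.trans hcc))]
      rw [e1, e2]
      exact hcond g' hg'
    · push_neg at hex
      have e1 : ∑ h : ↥H, (if IsConj g (h : G) then V.character h else 0) = 0 :=
        Finset.sum_eq_zero fun h _ => if_neg (hex (h : G) (Or.inl h.2))
      have e2 : ∑ k : ↥K, (if IsConj g (k : G) then W.character k else 0) = 0 :=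
        Finset.sum_eq_zero fun k _ => if_neg (hex (k : G) (Or.inr k.2))
      rw [e1, e2, mul_zero, mul_zero]
end

section
/- Let H ≤ G be finite groups. If no two distinct conjugacy classes of H merge in G (i.e., for all h, h' ∈ H, if h and h' are conjugate in G then they are conjugate in H), then any two representations of H that induce the same character of G already have equal characters on H (hence are equivalent). -/
lemma char_isConj_eq {H : Type} [Group H] (V : FDRep ℂ H) {a b : H} (hab : IsConj a b) :
    V.character a = V.character b := by
  obtain ⟨c, hc⟩ := isConj_iff.1 hab
  rw [← hc, FDRep.char_conj]

open FDRep in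
/-- If no two distinct conjugacy classes of a subgroup `H` of a finite group `G` merge
in `G` (elements of `H` conjugate in `G` are already conjugate in `G`), then any two
representations of `H` inducing the same character of `G` have equal characters on `H`. -/
theorem stmt_7 {G : Type} [Group G] [Fintype G] (H : Subgroup G)
    (hmerge : ∀ h h' : ↥H, IsConj (h : G) (h' : G) → IsConj h h')
    (V W : FDRep ℂ ↥H)
    (hInd : indChar H V.character = indChar H W.character) :
    V.character = W.character := by
  classical
  funext h
  set P : G ⧸ H → Prop := fun x => (Quotient.out x)⁻¹ * (h : G) * Quotient.out x ∈ H with hP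
  have key : ∀ U : FDRep ℂ ↥H, indChar H U.character (h : G) =
      ((Finset.univ.filter P).card : ℂ) * U.character h := by
    intro U
    have hterm : ∀ x : G ⧸ H,
        (if hx : (Quotient.out x)⁻¹ * (h : G) * Quotient.out x ∈ H
          then U.character ⟨(Quotient.out x)⁻¹ * (h : G) * Quotient.out x, hx⟩ else 0)
        = if P x then U.character h else 0 := by
      intro x
      by_cases hx : P x
      · rw [dif_pos hx, if_pos hx]
        have hconjG : IsConj (h : G)
            ((⟨(Quotient.out x)⁻¹ * (h : G) * Quotient.out x, hx⟩ : H) : G) := by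
          exact isConj_iff.2 ⟨(Quotient.out x)⁻¹, by group⟩
        exact (char_isConj_eq U (hmerge _ _ hconjG)).symm
      · rw [dif_neg hx, if_neg hx]
    rw [indChar, finsum_eq_sum_of_fintype, Finset.sum_congr rfl fun x _ => hterm x,
      ← Finset.sum_filter, Finset.sum_const, nsmul_eq_mul]
  have hne : (Finset.univ.filter P).card ≠ 0 := by
    rw [Finset.card_ne_zero]
    refine ⟨QuotientGroup.mk (1 : G), Finset.mem_filter.2 ⟨Finset.mem_univ _, ?_⟩⟩
    have hy : Quotient.out (QuotientGroup.mk (1 : G) : G ⧸ H) ∈ H := by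
      have h1 := QuotientGroup.out_eq' (QuotientGroup.mk (1 : G) : G ⧸ H)
      rw [QuotientGroup.eq] at h1
      exact H.inv_mem_iff.mp (by simpa using h1)
    exact H.mul_mem (H.mul_mem (H.inv_mem hy) h.2) hy
  have := congrFun hInd (h : G)
  rw [key V, key W] at this
  exact mul_left_cancel₀ (Nat.cast_ne_zero.2 hne) this
end

section
/- Let H and K be subgroups of a finite group G such that every element of H other than the identity fails to be conjugate in G to any element of K, and vice versa. If χ_H and χ_K are characters of representations of H and K with Ind_H^G χ_H = Ind_K^G χ_K, then χ_H(h) summed over H ∩ [g]_G vanishes for every non-identity g ∈ H, i.e., Σ_{h ∈ H ∩ [g]_G} χ_H(h) = 0 for all g ∈ H with g ≠ 1. -/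
open FDRep Classical in
/-- If no non-identity element of `H` is conjugate in `G` to an element of `K` and vice
versa, and characters `χ_H, χ_K` of representations of `H, K` induce the same character
of `G`, then `Σ_{h ∈ H ∩ [g]_G} χ_H(h) = 0` for every non-identity `g ∈ H`. -/
theorem stmt_17 {G : Type} [Group G] [Fintype G] (H K : Subgroup G) [Fintype ↥H]
    (hdisj : ∀ h : ↥H, (h : G) ≠ 1 → ∀ k : ↥K, ¬ IsConj (h : G) (k : G))
    (hdisj' : ∀ k : ↥K, (k : G) ≠ 1 → ∀ h : ↥H, ¬ IsConj (k : G) (h : G))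
    (V : FDRep ℂ ↥H) (W : FDRep ℂ ↥K)
    (hInd : indChar H V.character = indChar K W.character) :
    ∀ g : ↥H, (g : G) ≠ 1 →
      ∑ h : ↥H, (if IsConj (g : G) (h : G) then V.character h else 0) = 0 := by
  classical
  intro g hg
  set χ := V.character with hχ
  set T : G → G := fun x => x⁻¹ * ↑g * x with hT
  set F : G → ℂ := fun x => if h : T x ∈ H then χ ⟨T x, h⟩ else 0 with hF
  -- the induced character of K vanishes at g
  have hK0 : indChar K W.character (g : G) = 0 := by
    unfold indChar
    apply finsum_eq_zero_of_forall_eq_zero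
    intro x
    rw [dif_neg]
    intro hmem
    exact hdisj g hg ⟨_, hmem⟩ (isConj_iff.mpr ⟨(Quotient.out x)⁻¹, by group⟩)
  have hH0 : indChar H V.character (g : G) = 0 := by rw [hInd, hK0]
  -- F is invariant under right multiplication by H
  have hFinv : ∀ (y : G) (h : ↥H), F (y * (h : G)) = F y := by
    intro y h
    have hTy : T (y * (h : G)) = (h : G)⁻¹ * T y * (h : G) := by
      simp only [hT]; group
    by_cases hy : T y ∈ H
    · have h1 : T (y * (h : G)) ∈ H := by
        rw [hTy]; exact H.mul_mem (H.mul_mem (H.inv_mem h.2) hy) h.2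
      rw [hF]
      simp only
      rw [dif_pos h1, dif_pos hy]
      have he : (⟨T (y * (h : G)), h1⟩ : ↥H) = h⁻¹ * ⟨T y, hy⟩ * h := by
        ext; simp [hTy]
      rw [he, hχ]
      simpa using FDRep.char_conj V (⟨T y, hy⟩ : ↥H) h⁻¹
    · have h1 : T (y * (h : G)) ∉ H := by
        rw [hTy]; intro hc
        apply hy
        have hm := H.mul_mem (H.mul_mem h.2 hc) (H.inv_mem h.2)
        have heq : (h : G) * ((h : G)⁻¹ * T y * (h : G)) * (h : G)⁻¹ = T y := by group
        rwa [heq] at hm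
      rw [hF]
      simp only
      rw [dif_neg h1, dif_neg hy]
  -- equivalence (G ⧸ H) × H ≃ G
  have key : ∀ x : G, (QuotientGroup.mk (Quotient.out (QuotientGroup.mk x : G ⧸ H)) : G ⧸ H)
      = QuotientGroup.mk x := fun x => Quotient.out_eq _
  have memH : ∀ x : G, (Quotient.out (QuotientGroup.mk x : G ⧸ H))⁻¹ * x ∈ H := by
    intro x
    exact QuotientGroup.eq.mp (key x)
  set e : (G ⧸ H) × ↥H ≃ G := {
    toFun := fun p => Quotient.out p.1 * (p.2 : G)
    invFun := fun x => (QuotientGroup.mk x,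
      ⟨(Quotient.out (QuotientGroup.mk x : G ⧸ H))⁻¹ * x, memH x⟩)
    left_inv := by
      intro p
      have hq : (QuotientGroup.mk (Quotient.out p.1 * (p.2 : G)) : G ⧸ H) = p.1 := by
        conv_rhs => rw [show p.1 = QuotientGroup.mk (Quotient.out p.1) from (Quotient.out_eq _).symm]
        symm
        apply (QuotientGroup.eq).mpr
        have hh : (Quotient.out p.1)⁻¹ * (Quotient.out p.1 * (p.2 : G)) = ((p.2 : ↥H) : G) := by
          group
        rw [hh]; exact p.2.2
      refine Prod.ext hq ?_
      apply Subtype.ext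
      simp only
      rw [hq]
      group
    right_inv := by
      intro x
      simp only
      group } with he
  have E1 : ∑ x : G, F x = 0 := by
    have h1 : ∑ x : G, F x = ∑ p : (G ⧸ H) × ↥H, F (e p) := (Equiv.sum_comp e F).symm
    have h2 : ∀ p : (G ⧸ H) × ↥H, F (e p) = F (Quotient.out p.1) := by
      intro p; exact hFinv _ _
    rw [h1]
    calc ∑ p : (G ⧸ H) × ↥H, F (e p)
        = ∑ q : G ⧸ H, ∑ _h : ↥H, F (Quotient.out q) := by
          rw [Fintype.sum_prod_type]
          exact Finset.sum_congr rfl (fun q _ => Finset.sum_congr rfl (fun h _ => h2 (q, h)))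
      _ = (Fintype.card ↥H : ℂ) * ∑ q : G ⧸ H, F (Quotient.out q) := by
          rw [Finset.mul_sum]
          exact Finset.sum_congr rfl (fun q _ => by
            rw [Finset.sum_const, Finset.card_univ, nsmul_eq_mul])
      _ = (Fintype.card ↥H : ℂ) * indChar H V.character (g : G) := by
          unfold indChar
          rw [finsum_eq_sum_of_fintype]
      _ = 0 := by rw [hH0, mul_zero]
  -- fiber cardinality
  set N := Fintype.card (Subgroup.centralizer ({(g : G)} : Set G)) with hN
  have hcard : ∀ c : G, ∀ x₀ : G, T x₀ = c →
      Fintype.card {x : G // T x = c} = N := by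
    intro c x₀ hx₀
    apply Fintype.card_congr
    refine ⟨fun x => ⟨(x : G) * x₀⁻¹, ?_⟩, fun z => ⟨(z : G) * x₀, ?_⟩, ?_, ?_⟩
    · rw [Subgroup.mem_centralizer_iff]
      intro a ha
      rw [Set.mem_singleton_iff] at ha
      subst ha
      have hx : T (x : G) = T x₀ := by rw [x.2, hx₀]
      simp only [hT] at hx
      have h' : (g : G) * (x : G) = (x : G) * ((x : G)⁻¹ * (g : G) * (x : G)) := by group
      rw [hx] at h'
      calc (g : G) * ((x : G) * x₀⁻¹) = ((g : G) * (x : G)) * x₀⁻¹ := by group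
        _ = (x : G) * (x₀⁻¹ * (g : G) * x₀) * x₀⁻¹ := by rw [h']
        _ = (x : G) * x₀⁻¹ * (g : G) := by group
    · have hz : (g : G) * (z : G) = (z : G) * (g : G) :=
        (Subgroup.mem_centralizer_iff.mp z.2) (g : G) (Set.mem_singleton _)
      have hzz : (z : G)⁻¹ * (g : G) * (z : G) = (g : G) := by
        rw [mul_assoc, hz]; group
      show T ((z : G) * x₀) = c
      rw [← hx₀]
      simp only [hT]
      calc ((z : G) * x₀)⁻¹ * (g : G) * ((z : G) * x₀)
          = x₀⁻¹ * ((z : G)⁻¹ * (g : G) * (z : G)) * x₀ := by group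
        _ = x₀⁻¹ * (g : G) * x₀ := by rw [hzz]
    · intro x; apply Subtype.ext; simp only; group
    · intro z; apply Subtype.ext; simp only; group
  -- combined function
  set f : G → ℂ := fun c => if hc : c ∈ H ∧ IsConj (g : G) c then χ ⟨c, hc.1⟩ else 0 with hf
  have hfiber : ∀ c : G, (∑ x : {x : G // T x = c}, F (x : G)) = (N : ℂ) * f c := by
    intro c
    by_cases hex : ∃ x : G, T x = c
    · obtain ⟨x₀, hx₀⟩ := hex
      have hconj : IsConj (g : G) c := by
        refine isConj_iff.mpr ⟨x₀⁻¹, ?_⟩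
        rw [← hx₀]; simp only [hT]; group
      have hval : ∀ x : {x : G // T x = c}, F (x : G)
          = if hc : c ∈ H then χ ⟨c, hc⟩ else 0 := by
        intro x
        rw [hF]
        simp only
        congr 1 <;> rw [x.2]
      rw [Finset.sum_congr rfl (fun x _ => hval x), Finset.sum_const,
        Finset.card_univ, hcard c x₀ hx₀, nsmul_eq_mul]
      congr 1
      simp only [hf]
      by_cases hcH : c ∈ H
      · rw [dif_pos hcH, dif_pos ⟨hcH, hconj⟩]
      · rw [dif_neg hcH, dif_neg (fun hc => hcH hc.1)]
    · have hempty : IsEmpty {x : G // T x = c} := ⟨fun x => hex ⟨x, x.2⟩⟩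
      rw [@Finset.univ_eq_empty _ _ hempty, Finset.sum_empty]
      have hnc : ¬ IsConj (g : G) c := by
        intro hc
        obtain ⟨a, ha⟩ := isConj_iff.mp hc
        exact hex ⟨a⁻¹, by simp only [hT]; rw [inv_inv]; exact ha⟩
      symm
      simp only [hf]
      rw [dif_neg (fun hc => hnc hc.2), mul_zero]
  have E2 : (N : ℂ) * ∑ c : G, f c = 0 := by
    rw [Finset.mul_sum]
    calc ∑ c : G, (N : ℂ) * f c = ∑ c : G, ∑ x : {x : G // T x = c}, F (x : G) := by
          exact Finset.sum_congr rfl (fun c _ => (hfiber c).symm)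
      _ = ∑ x : G, F x := Fintype.sum_fiberwise T F
      _ = 0 := E1
  have hNne : (N : ℂ) ≠ 0 := by
    rw [hN]
    exact_mod_cast Nat.cast_ne_zero.mpr Fintype.card_ne_zero
  have hsum0 : ∑ c : G, f c = 0 := by
    rcases mul_eq_zero.mp E2 with h | h
    · exact absurd h hNne
    · exact h
  -- convert the sum over G to the sum over H
  have hconv : ∑ c : G, f c = ∑ h : ↥H, (if IsConj (g : G) (h : G) then χ h else 0) := by
    have step1 : ∑ c : G, f c = ∑ c ∈ Finset.univ.filter (· ∈ H), f c := by
      symm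
      rw [Finset.sum_filter]
      apply Finset.sum_congr rfl
      intro c _
      by_cases hcH : c ∈ H
      · rw [if_pos hcH]
      · rw [if_neg hcH]
        symm
        simp only [hf]
        rw [dif_neg (fun hc => hcH hc.1)]
    have step2 : ∑ c ∈ Finset.univ.filter (· ∈ H), f c = ∑ h : ↥H, f (h : G) :=
      Finset.sum_subtype _ (by simp) f
    rw [step1, step2]
    apply Finset.sum_congr rfl
    intro h _
    simp only [hf]
    by_cases hc : IsConj (g : G) (h : G)
    · rw [dif_pos ⟨h.2, hc⟩, if_pos hc]
    · rw [dif_neg (fun hh => hc hh.2), if_neg hc]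
  rw [← hconv]
  exact hsum0
end
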